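/- Let G be an embedded graph and k a natural number. Then, as an identity of rational functions in a variable b, k^{c(G)} · b^{r(G)} · R(G; (k+b)/b, bk, 1/k) = Σ_{φ ∈ R(G_m,k)} (b+1)^{total(φ)} · b^{white(φ)}, where the sum is over all R-permissible k-valuations of the canonically checkerboard coloured medial graph G_m. -/

import Mathlib

/-!
A flag (graph-encoded map) model of ribbon graphs / cellularly embedded graphs,
together with the graph polynomials studied by Ellis-Monaghan and Moffatt in
"Evaluations of topological Tutte polynomials".

An embedded graph is encoded by its set of edges `E`, a number of isolated
vertices, and a fixed-point-free involution `t1` on the set of flags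
`E × Bool × Bool` (each edge carries four flags; the fixed involutions
`t0 : (e,a,b) ↦ (e,!a,b)` and `t2 : (e,a,b) ↦ (e,a,!b)` cross the edge,
resp. move to the other side of the edge, while `t1` encodes the rotation
structure at the vertices).  Vertices are the orbits of `⟨t1,t2⟩`, faces the
orbits of `⟨t0,t1⟩`, and connected components the orbits of `⟨t0,t1,t2⟩`.
-/

open scoped Classical

noncomputable section

/-- A ribbon graph (equivalently, a cellularly embedded graph) in the flag model. -/
structure RibbonGraph where
  E : Type
  fintypeE : Fintype E
  decE : DecidableEq E
  isolated : ℕ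
  t1 : E × Bool × Bool → E × Bool × Bool
  inv1 : Function.Involutive t1
  fix1 : ∀ x, t1 x ≠ x

attribute [instance] RibbonGraph.fintypeE RibbonGraph.decE

/-- The number of orbits of the group generated by a family of moves encoded by the
relation `r`, computed as the number of connected components of the associated graph. -/
def orbCount {α : Type} (r : α → α → Prop) : ℕ :=
  Nat.card (SimpleGraph.fromRel r).ConnectedComponent

namespace RibbonGraph

variable (G : RibbonGraph)

/-- The flags of an embedded graph: four per edge. -/
abbrev Flag : Type := G.E × Bool × Bool

/-- The involution crossing an edge. -/
def t0 : G.Flag → G.Flag := fun x => (x.1, !x.2.1, x.2.2)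

/-- The involution moving to the other side of an edge. -/
def t2 : G.Flag → G.Flag := fun x => (x.1, x.2.1, !x.2.2)

lemma t0_invol : Function.Involutive G.t0 := by
  intro x; simp [t0]

lemma t2_invol : Function.Involutive G.t2 := by
  intro x; simp [t2]

/-- Two flags are in the same vertex iff they are connected in this graph. -/
def vertexGraph : SimpleGraph G.Flag :=
  SimpleGraph.fromRel fun x y => G.t1 x = y ∨ G.t2 x = y

/-- The number of vertices. -/
def vCount : ℕ :=
  orbCount (fun x y : G.Flag => G.t1 x = y ∨ G.t2 x = y) + G.isolated

/-- The number of edges. -/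
def eCount : ℕ := Fintype.card G.E

/-- The number of connected components of the spanning subgraph `(V, A)`. -/
def cSub (A : Finset G.E) : ℕ :=
  orbCount (fun x y : G.Flag => G.t1 x = y ∨ G.t2 x = y ∨ (x.1 ∈ A ∧ G.t0 x = y)) + G.isolated

/-- The number of connected components. -/
def cCount : ℕ := G.cSub Finset.univ

/-- The number of boundary components (faces) of the spanning ribbon subgraph `(V, A)`. -/
def fSub (A : Finset G.E) : ℕ :=
  orbCount (fun x y : G.Flag => G.t1 x = y ∨ (if x.1 ∈ A then G.t0 x else G.t2 x) = y) +
    G.isolated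

/-- The number of faces (boundary components of the ribbon graph). -/
def fCount : ℕ := G.fSub Finset.univ

/-- The rank `r(G) = v(G) - c(G)`. -/
def rank : ℕ := G.vCount - G.cCount

/-- The rank `r(A)` of the spanning subgraph `(V, A)`. -/
def rankSub (A : Finset G.E) : ℕ := G.vCount - G.cSub A

/-- The nullity `n(A) = |A| - r(A)` of the spanning subgraph `(V, A)`. -/
def nullSub (A : Finset G.E) : ℕ := A.card + G.cSub A - G.vCount

/-- The nullity `n(G) = e(G) - r(G)`. -/
def nullity : ℕ := G.nullSub Finset.univ

/-- The Euler genus `γ(A) = c(A) - f(A) + n(A)` of the spanning ribbon subgraph `(V, A)`. -/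
def genusSub (A : Finset G.E) : ℕ := 2 * G.cSub A + A.card - (G.vCount + G.fSub A)

/-! ### Partial Petrials and partial duals -/

/-- The flag involution realising a half-twist on the edges in `A`. -/
def twist (A : Finset G.E) : G.Flag → G.Flag :=
  fun x => if x.1 ∈ A then (x.1, xor x.2.1 x.2.2, x.2.2) else x

lemma twist_twist (A : Finset G.E) (x : G.Flag) : G.twist A (G.twist A x) = x := by
  by_cases h : x.1 ∈ A <;> simp [twist, h, Bool.xor_assoc]

/-- The partial Petrial `G^{τ(A)}`: give a half-twist to every edge in `A`. -/
def petrial (A : Finset G.E) : RibbonGraph where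
  E := G.E
  fintypeE := G.fintypeE
  decE := G.decE
  isolated := G.isolated
  t1 := fun x => G.twist A (G.t1 (G.twist A x))
  inv1 := by
    intro x
    show G.twist A (G.t1 (G.twist A (G.twist A (G.t1 (G.twist A x))))) = x
    rw [G.twist_twist, G.inv1 (G.twist A x), G.twist_twist]
  fix1 := by
    intro x h
    have h2 := congrArg (G.twist A) h
    rw [G.twist_twist] at h2
    exact G.fix1 _ h2

/-- The flag involution realising partial duality on the edges in `A`. -/
def swapS (A : Finset G.E) : G.Flag → G.Flag :=
  fun x => if x.1 ∈ A then (x.1, x.2.2, x.2.1) else x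

lemma swapS_swapS (A : Finset G.E) (x : G.Flag) : G.swapS A (G.swapS A x) = x := by
  by_cases h : x.1 ∈ A <;> simp [swapS, h]

/-- Chmutov's partial dual `G^{δ(A)}` of `G` with respect to `A ⊆ E(G)`. -/
def pdual (A : Finset G.E) : RibbonGraph where
  E := G.E
  fintypeE := G.fintypeE
  decE := G.decE
  isolated := G.isolated
  t1 := fun x => G.swapS A (G.t1 (G.swapS A x))
  inv1 := by
    intro x
    show G.swapS A (G.t1 (G.swapS A (G.swapS A (G.t1 (G.swapS A x))))) = x
    rw [G.swapS_swapS, G.inv1 (G.swapS A x), G.swapS_swapS]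
  fix1 := by
    intro x h
    have h2 := congrArg (G.swapS A) h
    rw [G.swapS_swapS] at h2
    exact G.fix1 _ h2

/-- The geometric dual `G*`. -/
def dual : RibbonGraph := G.pdual Finset.univ

/-- The Petrie dual `G^×`. -/
def petrialAll : RibbonGraph := G.petrial Finset.univ

/-! ### Graph polynomials -/

/-- The Bollobás–Riordan ribbon graph polynomial
`R(G;x,y,z) = Σ_{A⊆E} (x-1)^{r(G)-r(A)} y^{n(A)} z^{c(A)-f(A)+n(A)}`. -/
def BR {R : Type} [CommRing R] (x y z : R) : R :=
  ∑ A : Finset G.E,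
    (x - 1) ^ (G.rank - G.rankSub A) * y ^ G.nullSub A * z ^ G.genusSub A

/-- The Tutte polynomial `T(G;x,y) = Σ_{A⊆E} (x-1)^{r(G)-r(A)} (y-1)^{n(A)}`. -/
def tutte {R : Type} [CommRing R] (x y : R) : R :=
  ∑ A : Finset G.E, (x - 1) ^ (G.rank - G.rankSub A) * (y - 1) ^ G.nullSub A

/-- The chromatic polynomial of the underlying abstract graph of `G`, via Whitney's
rank expansion `χ(G;λ) = Σ_{A⊆E} (-1)^{|A|} λ^{c(A)}`. -/
def chromatic {R : Type} [CommRing R] (l : R) : R :=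
  ∑ A : Finset G.E, (-1 : R) ^ A.card * l ^ G.cSub A

/-- The Penrose polynomial `P(G;λ) = Σ_{A⊆E} (-1)^{|A|} λ^{f(G^{τ(A)})}`. -/
def penrose {R : Type} [CommRing R] (l : R) : R :=
  ∑ A : Finset G.E, (-1 : R) ^ A.card * l ^ (G.petrial A).fCount

/-- The topological transition polynomial `Q(G;(a,b,c),t)`, as the state sum over the
states of the medial graph `G_m`:  a state chooses at each vertex `v_e` of `G_m` a white
smoothing (`e ∈ A`), a black smoothing (`e ∈ B`) or a crossing (`e ∈ C`), and its number
of closed curves is the number of boundary components of the spanning ribbon subgraph of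
`G^{τ(C)}` on the edge set `A ∪ C`. -/
def transition {R : Type} [CommRing R] (a b c t : R) : R :=
  ∑ C : Finset G.E, ∑ A ∈ (Finset.univ \ C).powerset,
    a ^ A.card * b ^ (G.eCount - A.card - C.card) * c ^ C.card *
      t ^ ((G.petrial C).fSub (A ∪ C))

/-! ### Topological predicates -/

/-- `G` is orientable iff its flags admit a consistent 2-colouring
(the graph-encoded map is bipartite). -/
def Orientable : Prop :=
  ∃ o : G.Flag → Bool,
    (∀ x, o (G.t0 x) = !o x) ∧ (∀ x, o (G.t1 x) = !o x) ∧ (∀ x, o (G.t2 x) = !o x)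

/-- `G` is checkerboard colourable iff its faces can be properly 2-coloured. -/
def CheckerboardColourable : Prop :=
  ∃ c : G.Flag → Bool,
    (∀ x, c (G.t0 x) = c x) ∧ (∀ x, c (G.t1 x) = c x) ∧ (∀ x, c (G.t2 x) = !c x)

/-- `G` is a plane graph: connected with Euler genus `0`. -/
def IsPlane : Prop :=
  G.cCount = 1 ∧ (G.vCount : ℤ) - (G.eCount : ℤ) + (G.fCount : ℤ) = 2

/-- `G` has no loops: no edge has both of its ends on the same vertex. -/
def Loopless : Prop := ∀ x : G.Flag, ¬ G.vertexGraph.Reachable x (G.t0 x)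

/-- `G` contains a loop. -/
def HasLoop : Prop := ∃ x : G.Flag, G.vertexGraph.Reachable x (G.t0 x)

/-- The edge `e` of `G` is not a loop. -/
def NonLoop (e : G.E) : Prop :=
  ¬ G.vertexGraph.Reachable (e, true, true) (e, false, true)

/-- The underlying abstract graph of `G` admits a proper vertex 4-colouring. -/
def FourColourable : Prop :=
  ∃ c : G.Flag → Fin 4,
    (∀ x, c (G.t1 x) = c x) ∧ (∀ x, c (G.t2 x) = c x) ∧ (∀ x, c (G.t0 x) ≠ c x)

/-- `G` is cubic: every vertex has degree `3`, i.e. carries six flags. -/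
def Cubic : Prop :=
  G.isolated = 0 ∧
    ∀ C : G.vertexGraph.ConnectedComponent,
      Nat.card {x : G.Flag // G.vertexGraph.connectedComponentMk x = C} = 6

/-- The number of proper edge 3-colourings of `G`: edges sharing a vertex receive
distinct colours. -/
def EdgeColourings3 : ℕ :=
  Nat.card {c : G.E → Fin 3 //
    ∀ x y : G.Flag, G.vertexGraph.Reachable x y → x.1 ≠ y.1 → c x.1 ≠ c y.1}

/-! ### `k`-valuations of the medial graph

The edges of the medial graph `G_m` correspond to the corners `{x, t1 x}` of `G`,
together with one free loop for each isolated vertex of `G`.  The four medial edges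
incident with the medial vertex `v_e` correspond to the four flags of `e`. -/

section Valuations

variable {k : ℕ}

/-- The colours around `v_e` are paired across the white faces. -/
def WhiteAt (c : G.Flag → Fin k) (e : G.E) : Prop :=
  c (e, true, true) = c (e, false, true) ∧ c (e, true, false) = c (e, false, false)

/-- The colours around `v_e` are paired across the black faces. -/
def BlackAt (c : G.Flag → Fin k) (e : G.E) : Prop :=
  c (e, true, true) = c (e, true, false) ∧ c (e, false, true) = c (e, false, false)

/-- The colours around `v_e` are paired crosswise. -/
def CrossAt (c : G.Flag → Fin k) (e : G.E) : Prop :=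
  c (e, true, true) = c (e, false, false) ∧ c (e, true, false) = c (e, false, true)

/-- All four colours around `v_e` agree. -/
def TotalAt (c : G.Flag → Fin k) (e : G.E) : Prop :=
  c (e, true, true) = c (e, false, true) ∧ c (e, true, true) = c (e, true, false) ∧
    c (e, true, true) = c (e, false, false)

/-- A `k`-valuation of the medial graph `G_m`: an edge `k`-colouring of `G_m` such that
every vertex of `G_m` is incident with an even number of edges of each colour. -/
def IsValuation (c : G.Flag → Fin k) : Prop :=
  (∀ x, c (G.t1 x) = c x) ∧
    ∀ e : G.E, G.WhiteAt c e ∨ G.BlackAt c e ∨ G.CrossAt c e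

/-- The number of vertices of `G_m` of total type in a valuation. -/
def totalCount (c : G.Flag → Fin k) : ℕ :=
  (Finset.univ.filter fun e : G.E => G.TotalAt c e).card

/-- The number of vertices of `G_m` of white type in a valuation. -/
def whiteCount (c : G.Flag → Fin k) : ℕ :=
  (Finset.univ.filter fun e : G.E => G.WhiteAt c e ∧ ¬ G.TotalAt c e).card

/-- The number of vertices of `G_m` of black type in a valuation. -/
def blackCount (c : G.Flag → Fin k) : ℕ :=
  (Finset.univ.filter fun e : G.E => G.BlackAt c e ∧ ¬ G.TotalAt c e).card

/-- The number of vertices of `G_m` of crossing type in a valuation. -/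
def crossCount (c : G.Flag → Fin k) : ℕ :=
  (Finset.univ.filter fun e : G.E => G.CrossAt c e ∧ ¬ G.TotalAt c e).card

/-- The set `K(G_m,k)` of all `k`-valuations of `G_m` (a valuation also colours the
free loop of `G_m` arising from each isolated vertex of `G`). -/
def kvals (k : ℕ) : Finset ((G.Flag → Fin k) × (Fin G.isolated → Fin k)) :=
  Finset.univ.filter fun φ => G.IsValuation φ.1

/-- The set `R(G_m,k)` of `R`-permissible `k`-valuations: every vertex of `G_m` is of
white, black or total type. -/
def kvalsR (k : ℕ) : Finset ((G.Flag → Fin k) × (Fin G.isolated → Fin k)) :=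
  Finset.univ.filter fun φ =>
    G.IsValuation φ.1 ∧ ∀ e : G.E, ¬ (G.CrossAt φ.1 e ∧ ¬ G.TotalAt φ.1 e)

/-- The set `P(G_m,k)` of `P`-permissible `k`-valuations: every vertex of `G_m` is of
white, crossing or total type. -/
def kvalsP (k : ℕ) : Finset ((G.Flag → Fin k) × (Fin G.isolated → Fin k)) :=
  Finset.univ.filter fun φ =>
    G.IsValuation φ.1 ∧ ∀ e : G.E, ¬ (G.BlackAt φ.1 e ∧ ¬ G.TotalAt φ.1 e)

/-- The set `A(G_m,k)` of admissible `k`-valuations: every vertex of `G_m` is of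
white or crossing type. -/
def kvalsA (k : ℕ) : Finset ((G.Flag → Fin k) × (Fin G.isolated → Fin k)) :=
  Finset.univ.filter fun φ =>
    G.IsValuation φ.1 ∧
      ∀ e : G.E, ¬ G.TotalAt φ.1 e ∧ (G.WhiteAt φ.1 e ∨ G.CrossAt φ.1 e)

end Valuations

/-! ### Doubling all edges -/

/-- The flag involution of the doubled graph `D(G)`. -/
def dblT1 : (G.E × Bool) × Bool × Bool → (G.E × Bool) × Bool × Bool := fun x =>
  if x.1.2 = x.2.2 then
    (((G.t1 (x.1.1, x.2)).1, (G.t1 (x.1.1, x.2)).2.2), (G.t1 (x.1.1, x.2)).2)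
  else ((x.1.1, x.2.2), x.2.1, x.1.2)

lemma dblT1_invol : Function.Involutive G.dblT1 := by
  rintro ⟨⟨e, i⟩, a, b⟩
  by_cases h : i = b
  · subst h
    simp [dblT1, G.inv1 (e, a, i)]
  · simp [dblT1, h, Ne.symm h]

lemma dblT1_fix (x) : G.dblT1 x ≠ x := by
  rintro hcon
  obtain ⟨⟨e, i⟩, a, b⟩ := x
  by_cases h : i = b
  · subst h
    simp only [dblT1, if_pos rfl] at hcon
    have h1 : (G.t1 (e, a, i)).1 = e := congrArg (fun z => z.1.1) hcon
    have h2 : (G.t1 (e, a, i)).2 = (a, i) := congrArg (fun z => z.2) hcon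
    exact G.fix1 (e, a, i) (Prod.ext h1 h2)
  · simp only [dblT1, if_neg h] at hcon
    have h1 : b = i := congrArg (fun z => z.1.2) hcon
    exact h h1.symm

/-- The embedded graph `D(G)` obtained from `G` by doubling every edge: for each edge a
parallel copy is embedded so that the two copies bound a bigon face. -/
def double : RibbonGraph where
  E := G.E × Bool
  fintypeE := inferInstance
  decE := inferInstance
  isolated := G.isolated
  t1 := G.dblT1
  inv1 := G.dblT1_invol
  fix1 := G.dblT1_fix

end RibbonGraph

/-!
Expanding `R` at these values, the term of a spanning subgraph `A` becomes `k^{f(A)} b^{|A|}`,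
because `c(G) + (r(G) - r(A)) + n(A) - γ(A) = f(A)` and `r(G) - (r(G) - r(A)) + n(A) = |A|`.
Since the exponents are truncated subtractions, this needs `c(G) ≤ c(A) ≤ v(G) ≤ |A| + c(A)` and
`v(G) + f(A) ≤ 2 c(A) + |A|` (`γ(A) ≥ 0`). The latter is proved by adding the edges of `A` one
at a time: cutting the new edge `e` open, a parity argument shows that the four flags of `e` are
paired up by the boundary components of the cut surface, so gluing `e` white instead of black
creates at most one new boundary component, and removes one if `e` joins two components.

On the other side, `k^{f(A)}` counts the colourings of `G_m` that are constant on the boundary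
components of `A`, i.e. the valuations that are white at every edge of `A` and black at every
other edge. An `R`-permissible valuation arises in this way exactly from the sets `A` containing
its white vertices and contained in its white and total vertices, which contributes
`Σ_A b^{|A|} = (b+1)^{total} b^{white}`.
-/

open Finset in
theorem Finset.sum_filter_pow_card {ι R : Type*} [Fintype ι] [DecidableEq ι] [CommSemiring R]
    (p q : ι → Prop) [DecidablePred p] [DecidablePred q] (hpq : ∀ i, p i ∨ q i) (x : R) :
    ∑ A : Finset ι with (∀ i ∈ A, p i) ∧ ∀ i ∉ A, q i, x ^ A.card =
      (x + 1) ^ #{i | p i ∧ q i} * x ^ #{i | p i ∧ ¬ q i} := by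
  have hexp : ∏ i, ((if p i then x else 0) + if q i then 1 else 0) =
      ∑ A : Finset ι with (∀ i ∈ A, p i) ∧ ∀ i ∉ A, q i, x ^ A.card := by
    rw [prod_add, sum_filter, ← powerset_univ]
    refine sum_congr rfl fun A _ => ?_
    rw [prod_ite_zero, prod_ite_zero, prod_const, prod_const_one]
    simp only [mem_sdiff, mem_univ, true_and]
    split_ifs <;> simp_all
  have hfactor (i : ι) : ((if p i then x else 0) + if q i then 1 else 0) =
      if p i ∧ q i then x + 1 else if p i then x else 1 := by
    rcases hpq i with hp | hq <;> by_cases p i <;> by_cases q i <;> simp_all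
  rw [← hexp, prod_congr rfl fun i _ => hfactor i, prod_ite, prod_const, prod_ite, prod_const,
    prod_const_one, mul_one, filter_filter]
  congr 3
  ext i
  simp only [mem_filter, mem_univ, true_and]
  tauto

theorem Finset.even_card_of_involution {α : Type*} {s : Finset α} (f : α → α)
    (hmem : ∀ x ∈ s, f x ∈ s) (hne : ∀ x ∈ s, f x ≠ x) (hinv : ∀ x ∈ s, f (f x) = x) :
    Even s.card := by
  have h : ∑ _x ∈ s, (1 : ZMod 2) = 0 :=
    Finset.sum_involution (fun x _ => f x) (fun _ _ => by decide) (fun x hx _ => hne x hx)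
      hmem hinv
  rwa [Finset.sum_const, nsmul_one, ZMod.natCast_eq_zero_iff_even] at h

namespace SimpleGraph

variable {V : Type*} {G H K : SimpleGraph V} {a b c d u v : V}

theorem fromRel_or (r s : V → V → Prop) :
    fromRel (fun x y => r x y ∨ s x y) = fromRel r ⊔ fromRel s := by
  ext x y
  simp only [fromRel_adj, sup_adj]
  tauto

theorem forall_fromRel_adj_eq_iff {β : Type*} {r : V → V → Prop} {f : V → β} :
    (∀ x y, (fromRel r).Adj x y → f x = f y) ↔ ∀ x y, r x y → f x = f y := by
  refine ⟨fun h x y hxy => ?_, fun h x y hxy => ?_⟩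
  · by_cases hne : x = y
    · rw [hne]
    · exact h x y ((fromRel_adj ..).mpr ⟨hne, .inl hxy⟩)
  · rcases ((fromRel_adj ..).mp hxy).2 with hxy | hyx
    exacts [h x y hxy, (h y x hyx).symm]

theorem forall_reachable_eq_iff {β : Type*} {f : V → β} :
    (∀ u v, G.Reachable u v → f u = f v) ↔ ∀ u v, G.Adj u v → f u = f v := by
  refine ⟨fun h u v huv => h u v huv.reachable, fun h u v huv => ?_⟩
  rw [reachable_iff_reflTransGen] at huv
  induction huv with
  | refl => rfl
  | tail _ hadj ih => exact ih.trans (h _ _ hadj)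

theorem card_forall_adj_eq [Finite V] (β : Type*) :
    Nat.card {f : V → β // ∀ u v, G.Adj u v → f u = f v} =
      Nat.card β ^ Nat.card G.ConnectedComponent := by
  rw [← Nat.card_fun]
  refine Nat.card_congr ((Equiv.subtypeEquivRight fun f => ?_).trans
    (Setoid.liftEquiv G.reachableSetoid))
  rw [← forall_reachable_eq_iff]
  rfl

theorem reachable_sup_edge : (G ⊔ edge a b).Reachable a b := by
  rcases eq_or_ne a b with rfl | hne
  · rfl
  · exact Adj.reachable (.inr ((edge_adj ..).mpr ⟨.inl ⟨rfl, rfl⟩, hne⟩))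

theorem reachable_sup_edge_iff :
    (G ⊔ edge a b).Reachable u v ↔
      G.Reachable u v ∨ G.Reachable u a ∧ G.Reachable b v ∨ G.Reachable u b ∧ G.Reachable a v := by
  constructor
  · intro h
    rw [reachable_iff_reflTransGen] at h
    induction h with
    | refl => exact .inl .rfl
    | tail _ hadj ih =>
      rw [sup_adj, edge_adj] at hadj
      rcases hadj with hadj | ⟨⟨rfl, rfl⟩ | ⟨rfl, rfl⟩, -⟩
      · have := hadj.reachable
        rcases ih with h | ⟨h₁, h₂⟩ | ⟨h₁, h₂⟩
        exacts [.inl (h.trans this), .inr (.inl ⟨h₁, h₂.trans this⟩),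
          .inr (.inr ⟨h₁, h₂.trans this⟩)]
      · rcases ih with h | ⟨h, -⟩ | ⟨h, -⟩
        exacts [.inr (.inl ⟨h, .rfl⟩), .inr (.inl ⟨h, .rfl⟩), .inl h]
      · rcases ih with h | ⟨h, -⟩ | ⟨h, -⟩
        exacts [.inr (.inr ⟨h, .rfl⟩), .inl h, .inr (.inr ⟨h, .rfl⟩)]
  · have hG {x y} (h : G.Reachable x y) : (G ⊔ edge a b).Reachable x y := h.mono le_sup_left
    rintro (h | ⟨h₁, h₂⟩ | ⟨h₁, h₂⟩)
    · exact hG h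
    · exact (hG h₁).trans (reachable_sup_edge.trans (hG h₂))
    · exact (hG h₁).trans (reachable_sup_edge.symm.trans (hG h₂))

theorem reachable_sup_edge_eq (h : G.Reachable a b) : (G ⊔ edge a b).Reachable = G.Reachable := by
  ext u v
  rw [reachable_sup_edge_iff]
  refine ⟨?_, .inl⟩
  rintro (huv | ⟨hua, hbv⟩ | ⟨hub, hav⟩)
  exacts [huv, hua.trans (h.trans hbv), hub.trans (h.symm.trans hav)]

theorem reachable_sup_edge_of_reachable_of_reachable (hac : G.Reachable a c)
    (hbd : G.Reachable b d) : (G ⊔ edge a b).Reachable c d :=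
  (hac.symm.mono le_sup_left).trans (reachable_sup_edge.trans (hbd.mono le_sup_left))

theorem card_connectedComponent_sup_edge_of_reachable (h : G.Reachable a b) :
    Nat.card (G ⊔ edge a b).ConnectedComponent = Nat.card G.ConnectedComponent := by
  unfold ConnectedComponent
  rw [reachable_sup_edge_eq h]

theorem card_connectedComponent_sup_edge_add_one [Finite V] (h : ¬ G.Reachable a b) :
    Nat.card (G ⊔ edge a b).ConnectedComponent + 1 = Nat.card G.ConnectedComponent := by
  let π : {C : G.ConnectedComponent // C ≠ G.connectedComponentMk b} →
      (G ⊔ edge a b).ConnectedComponent := fun C => C.1.map (Hom.ofLE le_sup_left)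
  have hπ : π.Bijective := by
    constructor
    · rintro ⟨C, hC⟩ ⟨D, hD⟩ hCD
      induction C using ConnectedComponent.ind with | h x => ?_
      induction D using ConnectedComponent.ind with | h y => ?_
      obtain hxy | ⟨-, hby⟩ | ⟨hxb, -⟩ := reachable_sup_edge_iff.mp (ConnectedComponent.exact hCD)
      · exact Subtype.ext (ConnectedComponent.sound hxy)
      · exact absurd (ConnectedComponent.sound hby.symm) hD
      · exact absurd (ConnectedComponent.sound hxb) hC
    · intro C
      induction C using ConnectedComponent.ind with | h x => ?_
      by_cases hx : G.Reachable x b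
      · refine ⟨⟨G.connectedComponentMk a, fun h' => h (ConnectedComponent.exact h')⟩, ?_⟩
        exact ConnectedComponent.sound (reachable_sup_edge_iff.mpr (.inr (.inl ⟨.rfl, hx.symm⟩)))
      · exact ⟨⟨G.connectedComponentMk x, fun h' => hx (ConnectedComponent.exact h')⟩, rfl⟩
  rw [← Nat.card_eq_of_bijective π hπ, ← Finite.card_option,
    Nat.card_congr (Equiv.optionSubtypeNe _)]

theorem card_connectedComponent_le_sup_edge_add_one [Finite V] :
    Nat.card G.ConnectedComponent ≤ Nat.card (G ⊔ edge a b).ConnectedComponent + 1 := by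
  by_cases h : G.Reachable a b
  · rw [card_connectedComponent_sup_edge_of_reachable h]
    exact Nat.le_succ _
  · rw [card_connectedComponent_sup_edge_add_one h]

theorem card_connectedComponent_le_sup_edge_sup_edge_add_one [Finite V]
    (hac : G.Reachable a c) (hbd : G.Reachable b d) :
    Nat.card G.ConnectedComponent ≤ Nat.card (G ⊔ edge a b ⊔ edge c d).ConnectedComponent + 1 := by
  rw [card_connectedComponent_sup_edge_of_reachable
    (reachable_sup_edge_of_reachable_of_reachable hac hbd)]
  exact card_connectedComponent_le_sup_edge_add_one

theorem reachable_sup_edge_of_forall_exists_reachable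
    (hpart : ∀ x ∈ ({a, b, c, d} : Set V), ∃ y ∈ ({a, b, c, d} : Set V), y ≠ x ∧ H.Reachable x y) :
    (H ⊔ edge a c).Reachable b d := by
  obtain ⟨y, hy, hyb, hby⟩ := hpart b (by simp)
  obtain ⟨z, hz, hzd, hdz⟩ := hpart d (by simp)
  simp only [Set.mem_insert_iff, Set.mem_singleton_iff] at hy hz
  have hby' := ConnectedComponent.sound (hby.mono (le_sup_left : H ≤ H ⊔ edge a c))
  have hdz' := ConnectedComponent.sound (hdz.mono (le_sup_left : H ≤ H ⊔ edge a c))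
  have hac := ConnectedComponent.sound (reachable_sup_edge (G := H) (a := a) (b := c))
  rw [← ConnectedComponent.eq]
  grind

/-- The inductive step of `γ(A) ≥ 0`: `H ⊔ edge a c ⊔ edge b d` and `H ⊔ edge a b ⊔ edge c d` are
the face graphs before and after adding an edge with flags `a, b, c, d` to `A`, and `K`,
`K ⊔ edge a b ⊔ edge c d` the corresponding component graphs. -/
theorem card_connectedComponent_swap_pairing_le [Finite V] (hHK : H ≤ K)
    (hK₁ : K.Reachable a c) (hK₂ : K.Reachable b d)
    (hpart : ∀ x ∈ ({a, b, c, d} : Set V), ∃ y ∈ ({a, b, c, d} : Set V), y ≠ x ∧ H.Reachable x y) :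
    Nat.card (H ⊔ edge a b ⊔ edge c d).ConnectedComponent + 2 * Nat.card K.ConnectedComponent ≤
      Nat.card (H ⊔ edge a c ⊔ edge b d).ConnectedComponent +
        2 * Nat.card (K ⊔ edge a b ⊔ edge c d).ConnectedComponent + 1 := by
  have hF₁ : Nat.card (H ⊔ edge a b ⊔ edge c d).ConnectedComponent ≤
      Nat.card (H ⊔ edge a b).ConnectedComponent :=
    ConnectedComponent.card_le_card_of_le le_sup_left
  by_cases hab : K.Reachable a b
  · have hK : Nat.card (K ⊔ edge a b ⊔ edge c d).ConnectedComponent =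
        Nat.card K.ConnectedComponent := by
      rw [card_connectedComponent_sup_edge_of_reachable
          (reachable_sup_edge_of_reachable_of_reachable hK₁ hK₂),
        card_connectedComponent_sup_edge_of_reachable hab]
    have hH : Nat.card (H ⊔ edge a b).ConnectedComponent ≤ Nat.card H.ConnectedComponent :=
      ConnectedComponent.card_le_card_of_le le_sup_left
    have hF₀ : Nat.card H.ConnectedComponent ≤
        Nat.card (H ⊔ edge a c ⊔ edge b d).ConnectedComponent + 1 := by
      rw [card_connectedComponent_sup_edge_of_reachable
        (reachable_sup_edge_of_forall_exists_reachable hpart)]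
      exact card_connectedComponent_le_sup_edge_add_one
    omega
  · have hK' : ∀ {x y}, H.Reachable x y → K.Reachable x y := fun h => h.mono hHK
    have hac : H.Reachable a c := by
      obtain ⟨y, hy, hya, hay⟩ := hpart a (by simp)
      simp only [Set.mem_insert_iff, Set.mem_singleton_iff] at hy
      rcases hy with rfl | rfl | rfl | rfl
      exacts [absurd rfl hya, absurd (hK' hay) hab, hay, absurd ((hK' hay).trans hK₂.symm) hab]
    have hbd : H.Reachable b d := by
      obtain ⟨y, hy, hyb, hby⟩ := hpart b (by simp)
      simp only [Set.mem_insert_iff, Set.mem_singleton_iff] at hy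
      rcases hy with rfl | rfl | rfl | rfl
      exacts [absurd (hK' hby).symm hab, absurd rfl hyb, absurd (hK₁.trans (hK' hby).symm) hab,
        hby]
    have hF₀ : Nat.card (H ⊔ edge a c ⊔ edge b d).ConnectedComponent =
        Nat.card H.ConnectedComponent := by
      rw [card_connectedComponent_sup_edge_of_reachable (hbd.mono le_sup_left),
        card_connectedComponent_sup_edge_of_reachable hac]
    have hH := card_connectedComponent_sup_edge_add_one fun h => hab (hK' h)
    have hK := card_connectedComponent_le_sup_edge_sup_edge_add_one hK₁ hK₂
    omega

/-- If `q` were the only point of `s` in its component `S`, then `t` would pair up `S` and `σ`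
would pair up `S \ {q}`, so both would have even size. -/
theorem exists_reachable_ne_of_involutive [Finite V] {t σ : V → V} {s : Set V}
    (ht : Function.Involutive t) (ht' : ∀ x, t x ≠ x)
    (hσ : Function.Involutive σ) (hσ' : ∀ x, σ x ≠ x) (hσs : ∀ x ∉ s, σ x ∉ s)
    (hHt : ∀ x, H.Reachable x (t x)) (hHσ : ∀ x ∉ s, H.Reachable x (σ x)) {q : V} (hq : q ∈ s) :
    ∃ q' ∈ s, q' ≠ q ∧ H.Reachable q q' := by
  have := Fintype.ofFinite V
  by_contra! hcon
  set S := Finset.univ.filter (H.Reachable q)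
  have hS {x} : x ∈ S ↔ H.Reachable q x := by simp [S]
  have hqS : q ∈ S := hS.2 .rfl
  have hout : ∀ x ∈ S.erase q, x ∉ s := fun x hx hxs =>
    hcon x hxs (Finset.ne_of_mem_erase hx) (hS.1 (Finset.mem_of_mem_erase hx))
  have hS_even : Even S.card := Finset.even_card_of_involution t
    (fun x hx => hS.2 ((hS.1 hx).trans (hHt x))) (fun x _ => ht' x) (fun x _ => ht x)
  have hS'_even : Even (S.erase q).card := Finset.even_card_of_involution σ
    (fun x hx => Finset.mem_erase.2 ⟨fun h => hσs x (hout x hx) (h ▸ hq),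
      hS.2 ((hS.1 (Finset.mem_of_mem_erase hx)).trans (hHσ x (hout x hx)))⟩)
    (fun x _ => hσ' x) (fun x _ => hσ x)
  rw [Finset.card_erase_of_mem hqS] at hS'_even
  have := Finset.card_pos.2 ⟨q, hqS⟩
  obtain ⟨m, hm⟩ := hS_even
  obtain ⟨l, hl⟩ := hS'_even
  omega

end SimpleGraph

namespace RibbonGraph

open SimpleGraph

variable (G : RibbonGraph) (A : Finset G.E) (e : G.E)

/-- The state of `G_m` that is white at `v_e` for `e ∈ A` and black elsewhere, as the involution
pairing the flags of `e` that it joins. -/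
def smoothing : G.Flag → G.Flag := fun x => if x.1 ∈ A then G.t0 x else G.t2 x

def componentGraph : SimpleGraph G.Flag :=
  fromRel fun x y => G.t1 x = y ∨ G.t2 x = y ∨ (x.1 ∈ A ∧ G.t0 x = y)

def faceGraph : SimpleGraph G.Flag :=
  fromRel fun x y => G.t1 x = y ∨ G.smoothing A x = y

def faceGraphCut : SimpleGraph G.Flag :=
  fromRel fun x y => G.t1 x = y ∨ (x.1 ≠ e ∧ G.smoothing A x = y)

variable {k : ℕ} in
def IsFaceColouring (c : G.Flag → Fin k) : Prop :=
  ∀ x y, (G.faceGraph A).Adj x y → c x = c y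

variable {G A e}

theorem cSub_eq : G.cSub A = Nat.card (G.componentGraph A).ConnectedComponent + G.isolated := rfl

theorem fSub_eq : G.fSub A = Nat.card (G.faceGraph A).ConnectedComponent + G.isolated := rfl

theorem cSub_empty : G.cSub ∅ = G.vCount := by
  simp [cSub, vCount]

theorem fSub_empty : G.fSub ∅ = G.vCount := by
  simp [fSub, vCount]

theorem smoothing_involutive : Function.Involutive (G.smoothing A) := by
  rintro ⟨x, i, j⟩
  by_cases hx : x ∈ A <;> simp [smoothing, t0, t2, hx]

theorem smoothing_ne (x : G.Flag) : G.smoothing A x ≠ x := by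
  by_cases hx : x.1 ∈ A <;> simp [smoothing, t0, t2, hx, Prod.ext_iff]

theorem smoothing_fst (x : G.Flag) : (G.smoothing A x).1 = x.1 := by
  by_cases hx : x.1 ∈ A <;> simp [smoothing, t0, t2, hx]

theorem setOf_fst_eq :
    {x : G.Flag | x.1 = e} =
      {(e, true, true), (e, false, true), (e, true, false), (e, false, false)} := by
  ext ⟨x, i, j⟩
  cases i <;> cases j <;> simp [and_comm]

theorem fromRel_t0_at :
    fromRel (fun x y : G.Flag => x.1 = e ∧ G.t0 x = y) =
      edge (e, true, true) (e, false, true) ⊔ edge (e, true, false) (e, false, false) := by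
  ext ⟨x, i, j⟩ ⟨y, k, l⟩
  simp only [fromRel_adj, sup_adj, edge_adj, t0, Prod.ext_iff]
  cases i <;> cases j <;> cases k <;> cases l <;> simp <;> grind

theorem fromRel_t2_at :
    fromRel (fun x y : G.Flag => x.1 = e ∧ G.t2 x = y) =
      edge (e, true, true) (e, true, false) ⊔ edge (e, false, true) (e, false, false) := by
  ext ⟨x, i, j⟩ ⟨y, k, l⟩
  simp only [fromRel_adj, sup_adj, edge_adj, t2, Prod.ext_iff]
  cases i <;> cases j <;> cases k <;> cases l <;> simp <;> grind

theorem faceGraph_eq_sup :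
    G.faceGraph A = G.faceGraphCut A e ⊔ fromRel (fun x y => x.1 = e ∧ G.smoothing A x = y) := by
  rw [faceGraph, faceGraphCut, ← fromRel_or]
  congr 1
  ext x y
  tauto

theorem faceGraphCut_insert : G.faceGraphCut (insert e A) e = G.faceGraphCut A e := by
  unfold faceGraphCut smoothing
  congr 1
  ext x y
  by_cases hx : x.1 = e <;> simp [hx]

theorem faceGraph_eq_sup_of_notMem (he : e ∉ A) :
    G.faceGraph A = G.faceGraphCut A e ⊔ edge (e, true, true) (e, true, false) ⊔
      edge (e, false, true) (e, false, false) := by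
  rw [sup_assoc, ← fromRel_t2_at, faceGraph_eq_sup]
  congr 2
  ext x y
  simp +contextual [smoothing, he]

theorem faceGraph_insert_eq_sup :
    G.faceGraph (insert e A) = G.faceGraphCut A e ⊔ edge (e, true, true) (e, false, true) ⊔
      edge (e, true, false) (e, false, false) := by
  rw [sup_assoc, ← fromRel_t0_at, faceGraph_eq_sup, faceGraphCut_insert]
  congr 2
  ext x y
  simp +contextual [smoothing]

theorem componentGraph_insert_eq_sup :
    G.componentGraph (insert e A) = G.componentGraph A ⊔ edge (e, true, true) (e, false, true) ⊔
      edge (e, true, false) (e, false, false) := by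
  rw [sup_assoc, ← fromRel_t0_at, componentGraph, componentGraph, ← fromRel_or]
  congr 1
  ext x y
  simp only [Finset.mem_insert]
  tauto

theorem componentGraph_mono {B : Finset G.E} (h : A ⊆ B) :
    G.componentGraph A ≤ G.componentGraph B := by
  intro x y
  simp only [componentGraph, fromRel_adj]
  grind

theorem faceGraphCut_le_componentGraph : G.faceGraphCut A e ≤ G.componentGraph A := by
  intro x y
  simp only [faceGraphCut, componentGraph, fromRel_adj, smoothing]
  grind

theorem componentGraph_reachable_t2 (x : G.E) (i : Bool) :
    (G.componentGraph A).Reachable (x, i, true) (x, i, false) :=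
  Adj.reachable ((fromRel_adj ..).mpr ⟨by simp, .inl (.inr (.inl rfl))⟩)

theorem faceGraphCut_exists_reachable_ne :
    ∀ q ∈ {x : G.Flag | x.1 = e}, ∃ q' ∈ {x : G.Flag | x.1 = e}, q' ≠ q ∧
      (G.faceGraphCut A e).Reachable q q' := by
  have hadj {x y : G.Flag} (hxy : x ≠ y) (h : G.t1 x = y ∨ (x.1 ≠ e ∧ G.smoothing A x = y)) :
      (G.faceGraphCut A e).Reachable x y :=
    Adj.reachable ((fromRel_adj ..).mpr ⟨hxy, .inl h⟩)
  exact fun q => exists_reachable_ne_of_involutive G.inv1 G.fix1 smoothing_involutive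
    smoothing_ne (fun x hx => (smoothing_fst x).trans_ne hx)
    (fun x => hadj (G.fix1 x).symm (.inl rfl))
    (fun x hx => hadj (smoothing_ne x).symm (.inr ⟨hx, rfl⟩))

theorem cSub_anti {B : Finset G.E} (h : A ⊆ B) : G.cSub B ≤ G.cSub A :=
  Nat.add_le_add_right (ConnectedComponent.card_le_card_of_le (componentGraph_mono h)) _

theorem cCount_le_cSub : G.cCount ≤ G.cSub A := cSub_anti (Finset.subset_univ A)

theorem cSub_le_vCount : G.cSub A ≤ G.vCount := cSub_empty ▸ cSub_anti (Finset.empty_subset A)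

theorem cSub_le_cSub_insert_add_one : G.cSub A ≤ G.cSub (insert e A) + 1 := by
  rw [cSub_eq, cSub_eq, componentGraph_insert_eq_sup]
  have := card_connectedComponent_le_sup_edge_sup_edge_add_one
    (componentGraph_reachable_t2 (G := G) (A := A) e true)
    (componentGraph_reachable_t2 e false)
  omega

theorem vCount_le_card_add_cSub : G.vCount ≤ A.card + G.cSub A := by
  induction A using Finset.induction_on with
  | empty => simp [cSub_empty]
  | insert e A he ih =>
    have := cSub_le_cSub_insert_add_one (G := G) (A := A) (e := e)
    rw [Finset.card_insert_of_notMem he]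
    omega

theorem vCount_add_fSub_le : G.vCount + G.fSub A ≤ 2 * G.cSub A + A.card := by
  induction A using Finset.induction_on with
  | empty =>
    rw [cSub_empty, fSub_empty, Finset.card_empty]
    omega
  | insert e A he ih =>
    have := card_connectedComponent_swap_pairing_le faceGraphCut_le_componentGraph
      (componentGraph_reachable_t2 (G := G) (A := A) e true)
      (componentGraph_reachable_t2 e false)
      (setOf_fst_eq ▸ faceGraphCut_exists_reachable_ne)
    rw [fSub_eq, faceGraph_eq_sup_of_notMem he, cSub_eq] at ih
    rw [fSub_eq, faceGraph_insert_eq_sup, cSub_eq, componentGraph_insert_eq_sup,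
      Finset.card_insert_of_notMem he]
    omega

theorem BR_eval_eq_sum {F : Type} [Field F] {u x : F} (hu : u ≠ 0) (hx : x ≠ 0) :
    u ^ G.cCount * x ^ G.rank * G.BR ((u + x) / x) (x * u) u⁻¹ =
      ∑ A : Finset G.E, u ^ G.fSub A * x ^ A.card := by
  rw [BR, Finset.mul_sum, div_sub_one hx, add_sub_cancel_right]
  refine Finset.sum_congr rfl fun A _ => ?_
  -- these make the truncated subtractions in `rank`, `nullSub` and `genusSub` exact
  have := cCount_le_cSub (G := G) (A := A)
  have := cSub_le_vCount (G := G) (A := A)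
  have := vCount_le_card_add_cSub (G := G) (A := A)
  have := vCount_add_fSub_le (G := G) (A := A)
  have hu_exp : G.cCount + (G.rank - G.rankSub A) + G.nullSub A = G.fSub A + G.genusSub A := by
    unfold rank rankSub nullSub genusSub
    omega
  have hx_exp : G.rank + G.nullSub A = A.card + (G.rank - G.rankSub A) := by
    unfold rank rankSub nullSub
    omega
  calc u ^ G.cCount * x ^ G.rank *
        ((u / x) ^ (G.rank - G.rankSub A) * (x * u) ^ G.nullSub A * u⁻¹ ^ G.genusSub A)
      = u ^ (G.cCount + (G.rank - G.rankSub A) + G.nullSub A) * x ^ (G.rank + G.nullSub A) /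
          (x ^ (G.rank - G.rankSub A) * u ^ G.genusSub A) := by
        rw [pow_add, pow_add, pow_add, div_pow, mul_pow, inv_pow]
        field_simp
    _ = u ^ G.fSub A * x ^ A.card := by
        rw [hu_exp, hx_exp, pow_add, pow_add]
        field_simp

section Valuations

variable {k : ℕ} {c : G.Flag → Fin k}

theorem forall_smoothing_eq_iff :
    (∀ x, c (G.smoothing A x) = c x) ↔ (∀ e ∈ A, G.WhiteAt c e) ∧ ∀ e ∉ A, G.BlackAt c e := by
  constructor
  · intro h
    refine ⟨fun e he => ⟨?_, ?_⟩, fun e he => ⟨?_, ?_⟩⟩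
    · simpa [smoothing, t0, he] using h (e, false, true)
    · simpa [smoothing, t0, he] using h (e, false, false)
    · simpa [smoothing, t2, he] using h (e, true, false)
    · simpa [smoothing, t2, he] using h (e, false, false)
  · rintro ⟨hw, hb⟩ ⟨e, i, j⟩
    by_cases he : e ∈ A
    · have := hw e he
      cases i <;> cases j <;> simp_all [smoothing, t0, WhiteAt]
    · have := hb e he
      cases i <;> cases j <;> simp_all [smoothing, t2, BlackAt]

theorem isFaceColouring_iff : G.IsFaceColouring A c ↔
    (∀ x, c (G.t1 x) = c x) ∧ (∀ e ∈ A, G.WhiteAt c e) ∧ ∀ e ∉ A, G.BlackAt c e := by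
  rw [IsFaceColouring, faceGraph, forall_fromRel_adj_eq_iff, ← forall_smoothing_eq_iff]
  simp only [or_imp, forall_and, forall_eq']
  exact and_congr (forall_congr' fun x => eq_comm) (forall_congr' fun x => eq_comm)

theorem totalAt_iff : G.TotalAt c e ↔ G.WhiteAt c e ∧ G.BlackAt c e := by
  unfold TotalAt WhiteAt BlackAt
  grind

theorem CrossAt.totalAt_of_whiteAt (hc : G.CrossAt c e) (hw : G.WhiteAt c e) :
    G.TotalAt c e := by
  unfold TotalAt WhiteAt CrossAt at *
  grind

theorem CrossAt.totalAt_of_blackAt (hc : G.CrossAt c e) (hb : G.BlackAt c e) :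
    G.TotalAt c e := by
  unfold TotalAt BlackAt CrossAt at *
  grind

theorem mem_kvalsR_of_isFaceColouring {φ : (G.Flag → Fin k) × (Fin G.isolated → Fin k)}
    (h : G.IsFaceColouring A φ.1) : φ ∈ G.kvalsR k := by
  obtain ⟨ht1, hw, hb⟩ := isFaceColouring_iff.mp h
  simp only [kvalsR, Finset.mem_filter, Finset.mem_univ, true_and]
  refine ⟨⟨ht1, fun e => ?_⟩, fun e ⟨hc, hnt⟩ => hnt ?_⟩
  · by_cases he : e ∈ A
    exacts [.inl (hw e he), .inr (.inl (hb e he))]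
  · by_cases he : e ∈ A
    exacts [hc.totalAt_of_whiteAt (hw e he), hc.totalAt_of_blackAt (hb e he)]

theorem sum_filter_isFaceColouring {R : Type*} [CommSemiring R]
    {φ : (G.Flag → Fin k) × (Fin G.isolated → Fin k)} (hφ : φ ∈ G.kvalsR k) (x : R) :
    ∑ A : Finset G.E with G.IsFaceColouring A φ.1, x ^ A.card =
      (x + 1) ^ G.totalCount φ.1 * x ^ G.whiteCount φ.1 := by
  simp only [kvalsR, Finset.mem_filter, Finset.mem_univ, true_and] at hφ
  obtain ⟨⟨ht1, hval⟩, hR⟩ := hφ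
  have hWB (e : G.E) : G.WhiteAt φ.1 e ∨ G.BlackAt φ.1 e := by
    rcases hval e with hw | hb | hc
    · exact .inl hw
    · exact .inr hb
    · exact .inl (totalAt_iff.mp (not_and_not_right.mp (hR e) hc)).1
  rw [totalCount, whiteCount]
  convert Finset.sum_filter_pow_card _ _ hWB x using 4
  · simp [isFaceColouring_iff, ht1]
  · simp [totalAt_iff]
  · ext e
    simp +contextual [totalAt_iff]

theorem card_filter_isFaceColouring :
    (Finset.univ.filter fun φ : (G.Flag → Fin k) × (Fin G.isolated → Fin k) =>
      G.IsFaceColouring A φ.1).card = k ^ G.fSub A := by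
  rw [← Fintype.card_subtype, ← Nat.card_eq_fintype_card,
    Nat.card_congr Equiv.prodSubtypeFstEquivSubtypeProd, Nat.card_prod]
  simp only [IsFaceColouring]
  rw [card_forall_adj_eq, Nat.card_fun, Nat.card_fin, Nat.card_fin, fSub_eq, pow_add]

theorem sum_kvalsR_eq_sum {R : Type*} [CommSemiring R] (x : R) :
    ∑ φ ∈ G.kvalsR k, (x + 1) ^ G.totalCount φ.1 * x ^ G.whiteCount φ.1 =
      ∑ A : Finset G.E, (k : R) ^ G.fSub A * x ^ A.card := by
  calc ∑ φ ∈ G.kvalsR k, (x + 1) ^ G.totalCount φ.1 * x ^ G.whiteCount φ.1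
      = ∑ φ ∈ G.kvalsR k, ∑ A : Finset G.E with G.IsFaceColouring A φ.1, x ^ A.card :=
        Finset.sum_congr rfl fun φ hφ => (sum_filter_isFaceColouring hφ x).symm
    _ = ∑ A : Finset G.E, ∑ φ : (G.Flag → Fin k) × (Fin G.isolated → Fin k) with
          G.IsFaceColouring A φ.1, x ^ A.card := by
        refine Finset.sum_comm' fun φ A => ?_
        simp only [Finset.mem_filter, Finset.mem_univ, true_and, and_true]
        exact ⟨fun h => h.2, fun h => ⟨mem_kvalsR_of_isFaceColouring h, h⟩⟩
    _ = ∑ A : Finset G.E, (k : R) ^ G.fSub A * x ^ A.card := by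
        simp only [Finset.sum_const, card_filter_isFaceColouring, nsmul_eq_mul, Nat.cast_pow]

end Valuations

end RibbonGraph

/-- **Theorem.** For an embedded graph `G` and a natural number `k`, as an identity of
rational functions in a variable `b`,
`k^{c(G)} · b^{r(G)} · R(G; (k+b)/b, bk, 1/k) = Σ_{φ ∈ R(G_m,k)} (b+1)^{total(φ)} · b^{white(φ)}`,
the sum being over all `R`-permissible `k`-valuations of the canonically checkerboard
coloured medial graph `G_m`. -/
theorem BR_eq_sum_over_R_permissible (G : RibbonGraph) (k : ℕ) (hk : 0 < k) :
    (k : RatFunc ℚ) ^ G.cCount * RatFunc.X ^ G.rank *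
        G.BR (((k : RatFunc ℚ) + RatFunc.X) / RatFunc.X) (RatFunc.X * (k : RatFunc ℚ))
          ((k : RatFunc ℚ))⁻¹ =
      ∑ φ ∈ G.kvalsR k,
        (RatFunc.X + 1) ^ G.totalCount φ.1 * RatFunc.X ^ G.whiteCount φ.1 := by
  rw [G.sum_kvalsR_eq_sum, G.BR_eval_eq_sum (Nat.cast_ne_zero.mpr hk.ne') RatFunc.X_ne_zero]
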